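/- arXiv:2309.07265 — 2 statements merged into one kernel-verified Lean document; each statement's English description precedes it below -/
import Mathlib

section
/- Generalized Policy Improvement (monotonicity of the max policy value, exact case): Let Q^{π_i} be the exact action-value functions of n policies in a finite MDP with discount factor λ ∈ [0,1), and define π(κ) = argmax_a max_i Q^{π_i}(κ, a). Then Q^π(κ, a) ≥ max_i Q^{π_i}(κ, a) for all states κ and actions a. -/
theorem generalized_policy_improvement_exact
    {K A : Type*} [Fintype K] [Fintype A] [Nonempty K] [Nonempty A]
    (r : K → A → ℝ) (P : K → A → K → ℝ)
    (hP0 : ∀ κ a κ', 0 ≤ P κ a κ') (hP1 : ∀ κ a, ∑ κ', P κ a κ' = 1)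
    (lam : ℝ) (hlam0 : 0 ≤ lam) (hlam1 : lam < 1)
    (n : ℕ) (hn : 0 < n)
    (pol : Fin n → K → A) (Q : Fin n → K → A → ℝ)
    (hQ : ∀ i κ a, Q i κ a = r κ a + lam * ∑ κ', P κ a κ' * Q i κ' (pol i κ'))
    (π : K → A) (Qπ : K → A → ℝ)
    (hQπ : ∀ κ a, Qπ κ a = r κ a + lam * ∑ κ', P κ a κ' * Qπ κ' (π κ'))
    (hgreedy : ∀ κ a, ∃ j, ∀ i, Q i κ a ≤ Q j κ (π κ)) :
    ∀ κ a i, Q i κ a ≤ Qπ κ a := by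
  have hnF : Nonempty (Fin n) := ⟨⟨0, hn⟩⟩
  have hne : (Finset.univ : Finset (Fin n × K)).Nonempty := Finset.univ_nonempty
  set m := Finset.sup' Finset.univ hne
    (fun p => Q p.1 p.2 (π p.2) - Qπ p.2 (π p.2)) with hm
  have key : ∀ i κ a, Q i κ a - Qπ κ a ≤ lam * m := by
    intro i κ a
    have hsum : ∑ κ', P κ a κ' * (Q i κ' (pol i κ') - Qπ κ' (π κ')) ≤ m := by
      calc ∑ κ', P κ a κ' * (Q i κ' (pol i κ') - Qπ κ' (π κ'))
          ≤ ∑ κ', P κ a κ' * m := by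
            refine Finset.sum_le_sum fun κ' _ => ?_
            refine mul_le_mul_of_nonneg_left ?_ (hP0 κ a κ')
            obtain ⟨j, hj⟩ := hgreedy κ' (pol i κ')
            have h1 := hj i
            have h2 : Q j κ' (π κ') - Qπ κ' (π κ') ≤ m :=
              Finset.le_sup' (fun p : Fin n × K => Q p.1 p.2 (π p.2) - Qπ p.2 (π p.2))
                (Finset.mem_univ (j, κ'))
            linarith
        _ = m := by rw [← Finset.sum_mul, hP1, one_mul]
    have hdiff : Q i κ a - Qπ κ a
        = lam * ∑ κ', P κ a κ' * (Q i κ' (pol i κ') - Qπ κ' (π κ')) := by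
      rw [hQ, hQπ]
      simp only [mul_sub, Finset.sum_sub_distrib]
      ring
    rw [hdiff]
    exact mul_le_mul_of_nonneg_left hsum hlam0
  have hmlam : m ≤ lam * m :=
    Finset.sup'_le _ _ fun p _ => key p.1 p.2 (π p.2)
  have hm0 : m ≤ 0 := by nlinarith
  intro κ a i
  nlinarith [key i κ a]
end

section
/- Generalized Policy Improvement with approximation error: if |Q^{π_i}(κ,a) − Q̂^{π_i}(κ,a)| ≤ ε for all states κ, actions a, and i ∈ [n], and π(κ) = argmax_a max_i Q̂^{π_i}(κ,a), then Q^π(κ,a) ≥ max_i Q^{π_i}(κ,a) − (2/(1−λ)) ε for all κ, a. -/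
theorem generalized_policy_improvement_approx
    {K A : Type*} [Fintype K] [Fintype A] [Nonempty K] [Nonempty A]
    (r : K → A → ℝ) (P : K → A → K → ℝ)
    (hP0 : ∀ κ a κ', 0 ≤ P κ a κ') (hP1 : ∀ κ a, ∑ κ', P κ a κ' = 1)
    (lam : ℝ) (hlam0 : 0 ≤ lam) (hlam1 : lam < 1)
    (n : ℕ) (hn : 0 < n) (ε : ℝ) (hε : 0 ≤ ε)
    (pol : Fin n → K → A) (Q Qhat : Fin n → K → A → ℝ)
    (hQ : ∀ i κ a, Q i κ a = r κ a + lam * ∑ κ', P κ a κ' * Q i κ' (pol i κ'))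
    (happrox : ∀ i κ a, |Q i κ a - Qhat i κ a| ≤ ε)
    (π : K → A) (Qπ : K → A → ℝ)
    (hQπ : ∀ κ a, Qπ κ a = r κ a + lam * ∑ κ', P κ a κ' * Qπ κ' (π κ'))
    (hgreedy : ∀ κ a, ∃ j, ∀ i, Qhat i κ a ≤ Qhat j κ (π κ)) :
    ∀ κ a i, Q i κ a - (2 / (1 - lam)) * ε ≤ Qπ κ a := by
  have hnf : Nonempty (Fin n) := ⟨⟨0, hn⟩⟩
  have hne : (Finset.univ : Finset (K × A × Fin n)).Nonempty := Finset.univ_nonempty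
  set f : K × A × Fin n → ℝ := fun p => Q p.2.2 p.1 p.2.1 - Qπ p.1 p.2.1 with hf
  set δ := Finset.univ.sup' hne f with hδ
  have hle : ∀ κ a i, Q i κ a - Qπ κ a ≤ δ := fun κ a i =>
    Finset.le_sup' f (Finset.mem_univ (κ, a, i))
  have key : ∀ (κ' : K) (i : Fin n),
      Q i κ' (pol i κ') - Qπ κ' (π κ') ≤ δ + 2 * ε := by
    intro κ' i
    obtain ⟨j, hj⟩ := hgreedy κ' (pol i κ')
    have h1 := abs_le.mp (happrox i κ' (pol i κ'))
    have h2 := hj i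
    have h3 := abs_le.mp (happrox j κ' (π κ'))
    have h4 := hle κ' (π κ') j
    linarith [h1.2, h3.1]
  have hδle : δ ≤ lam * δ + 2 * ε := by
    obtain ⟨p, _, hp⟩ := Finset.exists_mem_eq_sup' hne f
    obtain ⟨κ, a, i⟩ := p
    have hsum : ∑ κ', P κ a κ' * (Q i κ' (pol i κ') - Qπ κ' (π κ'))
        = (∑ κ', P κ a κ' * Q i κ' (pol i κ')) - ∑ κ', P κ a κ' * Qπ κ' (π κ') := by
      rw [← Finset.sum_sub_distrib]
      exact Finset.sum_congr rfl fun κ' _ => mul_sub _ _ _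
    have hexp : f (κ, a, i)
        = lam * ∑ κ', P κ a κ' * (Q i κ' (pol i κ') - Qπ κ' (π κ')) := by
      simp only [hf]
      rw [hQ, hQπ, hsum]; ring
    have hbound : ∑ κ', P κ a κ' * (Q i κ' (pol i κ') - Qπ κ' (π κ'))
        ≤ δ + 2 * ε := by
      calc ∑ κ', P κ a κ' * (Q i κ' (pol i κ') - Qπ κ' (π κ'))
          ≤ ∑ κ', P κ a κ' * (δ + 2 * ε) :=
            Finset.sum_le_sum fun κ' _ =>
              mul_le_mul_of_nonneg_left (key κ' i) (hP0 κ a κ')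
        _ = (∑ κ', P κ a κ') * (δ + 2 * ε) := by rw [Finset.sum_mul]
        _ = δ + 2 * ε := by rw [hP1]; ring
    have hlamε : lam * ε ≤ ε := mul_le_of_le_one_left hε hlam1.le
    have : δ = f (κ, a, i) := hp
    rw [this, hexp]
    have := mul_le_mul_of_nonneg_left hbound hlam0
    nlinarith [hle κ a i, hexp]
  have h1lam : 0 < 1 - lam := by linarith
  have hδ2 : δ ≤ 2 / (1 - lam) * ε := by
    rw [div_mul_eq_mul_div, le_div_iff₀ h1lam]
    nlinarith
  intro κ a i
  linarith [hle κ a i]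
end
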